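/- There exists c < ∞ such that for all R ≥ 1 and all z ∈ ℤ² ∖ ℤ₊ with |z| ≤ 4R: E^z[ σ_{4R} ∧ τ_+ ] ≤ c · sin(θ_z/2) · R². -/

import Mathlib

open Filter
open scoped Classical

namespace LERW

/-- The lattice `ℤ² = ℤ + iℤ`. -/
abbrev V : Type := ℤ × ℤ

/-- Embedding of the lattice into `ℂ`. -/
noncomputable def toC (z : V) : ℂ := (z.1 : ℂ) + (z.2 : ℂ) * Complex.I

/-- Euclidean norm of a lattice point. -/
noncomputable def nrm (z : V) : ℝ := ‖toC z‖

/-- Euclidean diameter of a set of lattice points. -/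
noncomputable def diamV (K : Set V) : ℝ := Metric.diam (toC '' K)

/-- Lattice adjacency. -/
def adj (z w : V) : Prop := (z.1 - w.1).natAbs + (z.2 - w.2).natAbs = 1

/-- A (nearest-neighbor) walk: a nonempty list of consecutively adjacent points. -/
def IsWalk (ω : List V) : Prop := ω ≠ [] ∧ ω.Chain' adj

def starts (ω : List V) (z : V) : Prop := ω.head? = some z

def ends (ω : List V) (w : V) : Prop := ω.getLast? = some w

/-- The simple random walk weight `4^{-(number of steps)}` of a walk. -/
noncomputable def pweight (ω : List V) : ℝ := (1 / 4 : ℝ) ^ (ω.length - 1)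

/-- The zipper edges `{k, k - i}`, `k ≥ 1`, crossing just below the positive real axis. -/
def zipper (a b : V) : Prop :=
  a.1 = b.1 ∧ 1 ≤ a.1 ∧ ((a.2 = 0 ∧ b.2 = -1) ∨ (a.2 = -1 ∧ b.2 = 0))

/-- The sign `(-1)^{number of zipper crossings}` of a walk. -/
noncomputable def qsign (ω : List V) : ℝ :=
  (-1 : ℝ) ^ ((ω.zip ω.tail).countP fun e => decide (zipper e.1 e.2))

/-- Walks from `z` to `w`, otherwise staying in `A`. -/
def WalkTo (A : Set V) (z w : V) (ω : List V) : Prop :=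
  IsWalk ω ∧ starts ω z ∧ ends ω w ∧ ∀ x ∈ ω.dropLast, x ∈ A

/-- The Poisson kernel `H_A(z,w) = P^z{S_{τ_A} = w}` for `z ∈ A`, `w ∉ A`,
and `1{z = w}` for `z ∉ A`. -/
noncomputable def H (A : Set V) (z w : V) : ℝ :=
  if z ∈ A then ∑' ω : {ω : List V // WalkTo A z w ω}, pweight ω.1
  else if z = w then 1 else 0

/-- The signed (zipper) Poisson kernel
`H^q_A(z,w) = E^z[(-1)^{Q_{τ_A}} 1{S_{τ_A} = w}]` for `z ∈ A`, `w ∉ A`,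
and `1{z = w}` for `z ∉ A`. -/
noncomputable def Hq (A : Set V) (z w : V) : ℝ :=
  if z ∈ A then ∑' ω : {ω : List V // WalkTo A z w ω}, qsign ω.1 * pweight ω.1
  else if z = w then 1 else 0

/-- Walks from `z` to `w` staying in `A`. -/
def WalkIn (A : Set V) (z w : V) (ω : List V) : Prop :=
  IsWalk ω ∧ starts ω z ∧ ends ω w ∧ ∀ x ∈ ω, x ∈ A

/-- The Green's function `G_A(z,w)` of simple random walk in `A`: the expected
number of visits to `w` strictly before `τ_A` by the walk started at `z`. -/
noncomputable def G (A : Set V) (z w : V) : ℝ :=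
  ∑' ω : {ω : List V // WalkIn A z w ω}, pweight ω.1

/-- Walks started at `z`, stopped at the exit time of `B`. -/
def StoppedWalk (B : Set V) (z : V) (ω : List V) : Prop :=
  IsWalk ω ∧ starts ω z ∧ (∀ x ∈ ω.dropLast, x ∈ B) ∧ ∀ w, ends ω w → w ∉ B

noncomputable def lastVal (f : V → ℝ) (ω : List V) : ℝ := (ω.getLast?.map f).getD 0

/-- `E^z[f(S_{τ_B})]`, the expectation of `f` at the exit point of `B`. -/
noncomputable def exitExp (B : Set V) (z : V) (f : V → ℝ) : ℝ :=
  ∑' ω : {ω : List V // StoppedWalk B z ω}, pweight ω.1 * lastVal f ω.1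

/-- `ℤ₊`, the lattice points on the nonnegative real axis. -/
def Zplus : Set V := {z | 0 ≤ z.1 ∧ z.2 = 0}

/-- The discrete disk `D_R`. -/
def ballV (R : ℝ) : Set V := {z | nrm z < R}

/-- The set `D_R ∖ ℤ₊`, whose exit time is `σ_R ∧ τ_+`. -/
def contSet (R : ℝ) : Set V := {z | nrm z < R ∧ z ∉ Zplus}

/-- `P^z{σ_R < τ_+}`. -/
noncomputable def probEscape (z : V) (R : ℝ) : ℝ :=
  exitExp (contSet R) z fun w => if w ∈ Zplus then 0 else 1

/-- The outer boundary `∂A`: the points of `ℤ² ∖ A` adjacent to `A`. -/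
def bdry (A : Set V) : Set V := {w | w ∉ A ∧ ∃ z ∈ A, adj z w}

/-- The discrete circle `C_R = ∂D_R`. -/
def circ (R : ℝ) : Set V := bdry (ballV R)

/-- `θ_z = arg z ∈ [0, 2π)`. -/
noncomputable def theta (z : V) : ℝ :=
  if 0 ≤ (toC z).arg then (toC z).arg else (toC z).arg + 2 * Real.pi

/-- `f(z) = Im √z = |z|^{1/2} sin(θ_z/2)`. -/
noncomputable def fIm (z : V) : ℝ := Real.sqrt (nrm z) * Real.sin (theta z / 2)

/-- `v(z) = lim_{R→∞} R^{1/2} P^z{σ_R < τ_+}` (the limit exists). -/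
noncomputable def v (z : V) : ℝ :=
  limUnder atTop fun R : ℝ => Real.sqrt R * probEscape z R

/-- The four lattice neighbors of a point. -/
def nbrs (z : V) : List V := [(z.1 + 1, z.2), (z.1 - 1, z.2), (z.1, z.2 + 1), (z.1, z.2 - 1)]

/-- The discrete Laplacian `Lg(z) = ¼ ∑_{|w-z|=1} g(w) - g(z)`. -/
noncomputable def Lap (g : V → ℝ) (z : V) : ℝ := (1 / 4 : ℝ) * ((nbrs z).map g).sum - g z

/-- The boundary Poisson kernel `H_{∂A}(x,y) = ¼ ∑_{x' ∈ A, x' ~ x} H_A(x',y)`. -/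
noncomputable def Hbd (A : Set V) (x y : V) : ℝ :=
  (1 / 4 : ℝ) * ((nbrs x).map fun x' => if x' ∈ A then H A x' y else 0).sum

/-- `H_A(z,E) = ∑_{w ∈ E} H_A(z,w)`. -/
noncomputable def HSet (A : Set V) (z : V) (E : Set V) : ℝ := ∑' w : E, H A z w.1

/-- `H_{∂A}(x,E) = ∑_{y ∈ E} H_{∂A}(x,y)`. -/
noncomputable def HbdSet (A : Set V) (x : V) (E : Set V) : ℝ := ∑' w : E, Hbd A x w.1

/-- `U_R`, the square of side `2R` centered at the origin. -/
def squ (R : ℝ) : Set V := {z | |(z.1 : ℝ)| < R ∧ |(z.2 : ℝ)| < R}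

/-- The segment `{0, 1, …, R}` on the nonnegative real axis. -/
def seg (R : ℝ) : Set V := {z | 0 ≤ z.1 ∧ (z.1 : ℝ) ≤ R ∧ z.2 = 0}

/-- The slit square `U_R^- = U_R ∖ {0, 1, …, R}`. -/
def Uminus (R : ℝ) : Set V := squ R \ seg R

/-- Distance from `z` to the set `{R, R+iR, R-iR, -R+iR, -R-iR}`. -/
noncomputable def cornerDist (R : ℝ) (z : V) : ℝ :=
  Metric.infDist (toC z)
    {(R : ℂ), (R : ℂ) + (R : ℂ) * Complex.I, (R : ℂ) - (R : ℂ) * Complex.I,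
      -(R : ℂ) + (R : ℂ) * Complex.I, -(R : ℂ) - (R : ℂ) * Complex.I}

/-- A self-avoiding walk through the origin: pairwise distinct, consecutively
adjacent lattice points, one of which is `0`. -/
def IsSAW0 (η : List V) : Prop := η.Chain' adj ∧ η.Nodup ∧ ((0, 0) : V) ∈ η

/-- The vertex set of a SAW. -/
def sawSet (η : List V) : Set V := {x | x ∈ η}

/-- `v_η(z) = v(z) - ∑_{y ∈ η} H^q_{ℤ²∖η}(z,y) v(y)`. -/
noncomputable def vEta (η : List V) (z : V) : ℝ :=
  v z - ∑ y ∈ η.toFinset, Hq (sawSet η)ᶜ z y * v y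

/-- The discrete harmonic conjugate `u` of `v`. -/
noncomputable def uFn (z : V) : ℝ := if 0 ≤ z.2 then v (-z.1, z.2) else -v (-z.1, z.2)

/-- `u_η(z) = u(z) - ∑_{y ∈ η} H^q_{ℤ²∖η}(z,y) u(y)`. -/
noncomputable def uEta (η : List V) (z : V) : ℝ :=
  uFn z - ∑ y ∈ η.toFinset, Hq (sawSet η)ᶜ z y * uFn y

/-- Complex conjugation on the lattice. -/
def conjV (w : V) : V := (w.1, -w.2)

/-- `h_m^η(z,w) = ½ [H^q_{D_m∖η}(z,w) + H^q_{D_m∖η}(z,w̄)]`. -/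
noncomputable def hEta (η : List V) (m : ℝ) (z w : V) : ℝ :=
  (Hq (ballV m \ sawSet η) z w + Hq (ballV m \ sawSet η) z (conjV w)) / 2

/-- `P^z{S(σ_m ∧ τ_+) = w}`. -/
noncomputable def hitPt (m : ℝ) (z w : V) : ℝ :=
  exitExp (contSet m) z fun x => if x = w then 1 else 0

/-- `μ_m(w) = ½ [P^{-1}{S(σ_m ∧ τ_+) = w} + P^{-1}{S(σ_m ∧ τ_+) = w̄}] / P^{-1}{σ_m < τ_+}`. -/
noncomputable def mu (m : ℝ) (w : V) : ℝ :=
  ((hitPt m (-1, 0) w + hitPt m (-1, 0) (conjV w)) / 2) / probEscape (-1, 0) m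

/-- `P^z{σ_R < τ_+, S(σ_R) = w}`. -/
noncomputable def escHit (z : V) (R : ℝ) (w : V) : ℝ :=
  exitExp (contSet R) z fun x => if x = w ∧ x ∉ Zplus then 1 else 0

/-- The infinite vertical strip `A_n = {x + iy : |x| < n}`. -/
def strip (n : ℝ) : Set V := {z | |(z.1 : ℝ)| < n}

/-- `v_η^{(n)}(z) = H^q_{A_n∖η}(z, -n)`. -/
noncomputable def vEtaN (η : List V) (n : ℕ) (z : V) : ℝ :=
  Hq (strip n \ sawSet η) z (-(n : ℤ), 0)

/-- `u_η^{(n)}(z) = H^q_{A_n∖η}(z, n)`. -/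
noncomputable def uEtaN (η : List V) (n : ℕ) (z : V) : ℝ :=
  Hq (strip n \ sawSet η) z ((n : ℤ), 0)

/-- `P^z{S_0, …, S_{k-1} ∈ B}`: total weight of walks with `k` vertices from `z`
staying in `B`. -/
noncomputable def stayProb (B : Set V) (z : V) (k : ℕ) : ℝ :=
  ∑' ω : {ω : List V // ω.length = k ∧ IsWalk ω ∧ starts ω z ∧ ∀ x ∈ ω, x ∈ B},
    pweight ω.1

/-- `E^z[τ_B] = ∑_{k ≥ 0} P^z{τ_B > k}`, the expected exit time of `B`. -/
noncomputable def expTime (B : Set V) (z : V) : ℝ := ∑' k : ℕ, stayProb B z (k + 1)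

open scoped ENNReal
open Finset

/-!
If `φ ≥ 0` and `Lap φ ≤ -1` on `B`, then `E^z[τ_B] ≤ φ z`: first-step analysis gives
`∑_{j<K} P^z{τ_B > j} ≤ φ z` by induction on `K`, simultaneously for all starting points.

For `B = D_{4R} ∖ ℤ₊` such a `φ` is the minimum of two barriers. The disk barrier
`40R² - |w|²` works everywhere in `D_{4R}`. The slit barrier `66R|y| - 2y² + 100R² ψ` is built
from `ψ(x, y) ≈ 2y/x - y³/x³`, a discrete analogue of a superharmonic function of the wedge
`|y| ≤ x/2` (truncations keep both barriers nonnegative on all of `ℤ²`). Where the slit barrier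
is the smaller one, `ψ ≤ 2/5`, which forces `z` into a thin wedge around `ℤ₊` on which its
Laplacian is at most `-1`. Finally `|y| ≤ 2|z| sin(θ_z/2)` and `min (1/2) ψ ≤ 5 sin(θ_z/2)`
bound the slit barrier by `1028 sin(θ_z/2) R²`.
-/

lemma adj_mem_nbrs {z w : V} (h : adj z w) : w ∈ nbrs z := by
  simp only [adj] at h
  simp only [nbrs, List.mem_cons, Prod.ext_iff, List.not_mem_nil, or_false]
  omega

lemma nbrs_nodup (z : V) : (nbrs z).Nodup := by
  simp only [nbrs, List.nodup_cons, List.mem_cons, Prod.ext_iff, List.not_mem_nil,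
    List.nodup_nil, or_false, not_false_eq_true, and_true]
  omega

lemma toC_re (z : V) : (toC z).re = z.1 := by simp [toC]

lemma toC_im (z : V) : (toC z).im = z.2 := by simp [toC]

lemma nrm_sq (z : V) : nrm z ^ 2 = (z.1 : ℝ) ^ 2 + (z.2 : ℝ) ^ 2 := by
  rw [nrm, Complex.sq_norm, Complex.normSq_apply, toC_re, toC_im]
  ring

lemma abs_fst_le_nrm (z : V) : |(z.1 : ℝ)| ≤ nrm z := by
  simpa [nrm, toC_re] using Complex.abs_re_le_norm (toC z)

lemma abs_snd_le_nrm (z : V) : |(z.2 : ℝ)| ≤ nrm z := by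
  simpa [nrm, toC_im] using Complex.abs_im_le_norm (toC z)

lemma ne_zero_of_notMem_Zplus {z : V} (hz : z ∉ Zplus) : z ≠ 0 := by
  rintro rfl
  exact hz ⟨le_rfl, rfl⟩

lemma nrm_pos {z : V} (hz : z ≠ 0) : 0 < nrm z := by
  refine norm_pos_iff.mpr fun h => hz ?_
  have hre := congrArg Complex.re h
  have him := congrArg Complex.im h
  simp only [toC_re, toC_im, Complex.zero_re, Complex.zero_im, Int.cast_eq_zero] at hre him
  exact Prod.ext hre him

lemma sq_add_sq_le_of_mem_nbrs {z w : V} (hw : w ∈ nbrs z) :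
    (w.1 : ℝ) ^ 2 + (w.2 : ℝ) ^ 2 ≤ (nrm z + 1) ^ 2 := by
  have hx := abs_le.mp (abs_fst_le_nrm z)
  have hy := abs_le.mp (abs_snd_le_nrm z)
  have hr := nrm_sq z
  simp only [nbrs, List.mem_cons, List.not_mem_nil, or_false] at hw
  rcases hw with rfl | rfl | rfl | rfl <;> push_cast <;> nlinarith

lemma Lap_le_Lap_of_le {f g : V → ℝ} {z : V} (hle : ∀ w ∈ nbrs z, f w ≤ g w)
    (heq : f z = g z) : Lap f z ≤ Lap g z := by
  unfold Lap
  linarith [List.sum_le_sum hle]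

lemma Lap_comp_abs_snd (H : ℝ → ℝ → ℝ) {z : V} (hz : z.2 ≠ 0) :
    Lap (fun w => H w.1 |(w.2 : ℝ)|) z =
      1 / 4 * (H (z.1 + 1) |(z.2 : ℝ)| + H (z.1 - 1) |(z.2 : ℝ)| + H z.1 (|(z.2 : ℝ)| + 1)
        + H z.1 (|(z.2 : ℝ)| - 1)) - H z.1 |(z.2 : ℝ)| := by
  simp only [Lap, nbrs, List.map_cons, List.map_nil, List.sum_cons, List.sum_nil, add_zero]
  push_cast
  have hy : (1 : ℝ) ≤ z.2 ∨ (z.2 : ℝ) ≤ -1 := by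
    rcases lt_or_gt_of_ne hz with h | h
    · exact Or.inr (by exact_mod_cast (show z.2 ≤ -1 by omega))
    · exact Or.inl (by exact_mod_cast (show 1 ≤ z.2 by omega))
  rcases hy with h | h
  · have e1 : |(z.2 : ℝ) + 1| = |(z.2 : ℝ)| + 1 := by
      rw [abs_of_nonneg (by linarith), abs_of_nonneg (by linarith)]
    have e2 : |(z.2 : ℝ) - 1| = |(z.2 : ℝ)| - 1 := by
      rw [abs_of_nonneg (by linarith), abs_of_nonneg (by linarith)]
    rw [e1, e2]; ring
  · have e1 : |(z.2 : ℝ) + 1| = |(z.2 : ℝ)| - 1 := by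
      rw [abs_of_nonpos (by linarith), abs_of_nonpos (by linarith)]; ring
    have e2 : |(z.2 : ℝ) - 1| = |(z.2 : ℝ)| + 1 := by
      rw [abs_of_nonpos (by linarith), abs_of_nonpos (by linarith)]; ring
    rw [e1, e2]; ring

lemma pweight_cons (a : V) {l : List V} (hl : l ≠ []) :
    pweight (a :: l) = 4⁻¹ * pweight l := by
  obtain ⟨n, hn⟩ := Nat.exists_eq_succ_of_ne_zero (List.length_pos_iff.mpr hl).ne'
  simp [pweight, hn, pow_succ']

def StayWalk (B : Set V) (z : V) (k : ℕ) (ω : List V) : Prop :=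
  ω.length = k ∧ IsWalk ω ∧ starts ω z ∧ ∀ x ∈ ω, x ∈ B

-- `stayProb` in `ℝ≥0∞`, where the first-step decomposition needs no summability argument.
noncomputable def stayMass (B : Set V) (z : V) (k : ℕ) : ℝ≥0∞ :=
  ∑' ω : {ω // StayWalk B z k ω}, ENNReal.ofReal (pweight ω.1)

section StayWalk

variable {B : Set V} {z : V} {k : ℕ} {ω : List V}

lemma StayWalk.start_mem (h : StayWalk B z k ω) : z ∈ B :=
  h.2.2.2 z (List.mem_of_mem_head? h.2.2.1)

lemma StayWalk.eq_of_length_one (h : StayWalk B z 1 ω) : ω = [z] := by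
  obtain ⟨a, rfl⟩ := List.length_eq_one_iff.mp h.1
  simpa [starts] using h.2.2.1

lemma StayWalk.eq_cons (h : StayWalk B z (k + 1) ω) : ω = z :: ω.tail := by
  obtain ⟨-, -, hs, -⟩ := h
  cases ω with
  | nil => simp [starts] at hs
  | cons a t => simpa [starts] using hs

lemma StayWalk.tail (h : StayWalk B z (k + 2) ω) :
    ω.tail.headD z ∈ (nbrs z).toFinset ∧ StayWalk B (ω.tail.headD z) (k + 1) ω.tail := by
  obtain ⟨hlen, ⟨-, hchain⟩, hs, hB⟩ := h
  match ω, hlen, hchain, hs, hB with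
  | a :: w :: t, hlen, hchain, hs, hB =>
    obtain rfl : a = z := by simpa [starts] using hs
    obtain ⟨hzw, hchain⟩ := List.isChain_cons_cons.mp hchain
    refine ⟨List.mem_toFinset.mpr (adj_mem_nbrs hzw), ?_,
      ⟨List.cons_ne_nil _ _, hchain⟩, rfl, ?_⟩
    · simpa using hlen
    · exact fun x hx => hB x (List.mem_cons_of_mem _ hx)

end StayWalk

lemma stayProb_eq_toReal_stayMass (B : Set V) (z : V) (k : ℕ) :
    stayProb B z k = (stayMass B z k).toReal := by
  rw [stayMass, ENNReal.tsum_toReal_eq fun _ => ENNReal.ofReal_ne_top]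
  exact tsum_congr fun ω => (ENNReal.toReal_ofReal (by unfold pweight; positivity)).symm

lemma stayMass_of_notMem {B : Set V} {z : V} (hz : z ∉ B) (k : ℕ) : stayMass B z k = 0 := by
  have : IsEmpty {ω // StayWalk B z k ω} := ⟨fun ω => hz ω.2.start_mem⟩
  exact tsum_empty

lemma stayMass_one_le (B : Set V) (z : V) : stayMass B z 1 ≤ 1 := by
  have hinj : Function.Injective fun _ : {ω // StayWalk B z 1 ω} => () := fun ω ω' _ =>
    Subtype.ext (ω.2.eq_of_length_one.trans ω'.2.eq_of_length_one.symm)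
  calc stayMass B z 1
      = ∑' ω : {ω // StayWalk B z 1 ω}, (fun _ : Unit => (1 : ℝ≥0∞)) () :=
        tsum_congr fun ω => by simp [ω.2.eq_of_length_one, pweight]
    _ ≤ ∑' _ : Unit, 1 := ENNReal.tsum_comp_le_tsum_of_injective hinj _
    _ = 1 := by simp

lemma stayMass_succ_succ_le (B : Set V) (z : V) (k : ℕ) :
    stayMass B z (k + 2) ≤ 4⁻¹ * ∑ w ∈ (nbrs z).toFinset, stayMass B w (k + 1) := by
  let tailMap : {ω // StayWalk B z (k + 2) ω} →
      Σ w : (nbrs z).toFinset, {ω // StayWalk B w (k + 1) ω} :=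
    fun ω => ⟨⟨_, ω.2.tail.1⟩, ⟨_, ω.2.tail.2⟩⟩
  have hinj : Function.Injective tailMap := fun ω ω' h => by
    have htail : ω.1.tail = ω'.1.tail := congrArg (fun p => p.2.1) h
    exact Subtype.ext (by rw [ω.2.eq_cons, ω'.2.eq_cons, htail])
  calc stayMass B z (k + 2)
      = ∑' ω, (fun p : Σ w : (nbrs z).toFinset, {ω // StayWalk B w (k + 1) ω} =>
          4⁻¹ * ENNReal.ofReal (pweight p.2.1)) (tailMap ω) := by
        refine tsum_congr fun ω => ?_
        have hne : ω.1.tail ≠ [] := ω.2.tail.2.2.1.1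
        conv_lhs => rw [ω.2.eq_cons, pweight_cons z hne, ENNReal.ofReal_mul (by norm_num)]
        simp [tailMap]
    _ ≤ ∑' p : Σ w : (nbrs z).toFinset, {ω // StayWalk B w (k + 1) ω},
          4⁻¹ * ENNReal.ofReal (pweight p.2.1) :=
        ENNReal.tsum_comp_le_tsum_of_injective hinj _
    _ = 4⁻¹ * ∑ w ∈ (nbrs z).toFinset, stayMass B w (k + 1) := by
        rw [ENNReal.tsum_sigma', ← Finset.tsum_subtype, ← ENNReal.tsum_mul_left]
        simp only [stayMass, ENNReal.tsum_mul_left]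

lemma one_add_quarter_sum_nbrs_le {φ : V → ℝ} (hφ : ∀ w, 0 ≤ φ w) {z : V}
    (hz : Lap φ z ≤ -1) :
    1 + 4⁻¹ * ∑ w ∈ (nbrs z).toFinset, ENNReal.ofReal (φ w) ≤ ENNReal.ofReal (φ z) := by
  rw [← ENNReal.ofReal_sum_of_nonneg fun w _ => hφ w, List.sum_toFinset _ (nbrs_nodup z)]
  have hsum : 0 ≤ ((nbrs z).map φ).sum := List.sum_nonneg fun x hx => by
    obtain ⟨w, -, rfl⟩ := List.mem_map.mp hx
    exact hφ w
  have hquarter : (4⁻¹ : ℝ≥0∞) = ENNReal.ofReal 4⁻¹ := by simp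
  rw [hquarter, ← ENNReal.ofReal_mul (by norm_num),
    ← ENNReal.ofReal_one, ← ENNReal.ofReal_add zero_le_one (by positivity)]
  exact ENNReal.ofReal_le_ofReal (by unfold Lap at hz; norm_num at hz ⊢; linarith)

lemma sum_range_stayMass_le {B : Set V} {φ : V → ℝ} (hφ : ∀ w, 0 ≤ φ w)
    (hLap : ∀ x ∈ B, Lap φ x ≤ -1) (K : ℕ) (z : V) :
    ∑ j ∈ range K, stayMass B z (j + 1) ≤ ENNReal.ofReal (φ z) := by
  induction K generalizing z with
  | zero => simp
  | succ K ih =>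
    by_cases hz : z ∈ B
    · calc ∑ j ∈ range (K + 1), stayMass B z (j + 1)
          = stayMass B z 1 + ∑ j ∈ range K, stayMass B z (j + 2) := by
            rw [sum_range_succ', add_comm]
        _ ≤ 1 + ∑ j ∈ range K,
              4⁻¹ * ∑ w ∈ (nbrs z).toFinset, stayMass B w (j + 1) := by
            gcongr with j
            · exact stayMass_one_le B z
            · exact stayMass_succ_succ_le B z j
        _ = 1 + 4⁻¹ * ∑ w ∈ (nbrs z).toFinset, ∑ j ∈ range K, stayMass B w (j + 1) := by
            rw [← mul_sum, sum_comm]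
        _ ≤ 1 + 4⁻¹ * ∑ w ∈ (nbrs z).toFinset, ENNReal.ofReal (φ w) := by
            gcongr with w
            exact ih w
        _ ≤ ENNReal.ofReal (φ z) := one_add_quarter_sum_nbrs_le hφ (hLap z hz)
    · simp [stayMass_of_notMem hz]

theorem expTime_le_of_Lap_le_neg_one {B : Set V} {φ : V → ℝ} (hφ : ∀ w, 0 ≤ φ w)
    (hLap : ∀ x ∈ B, Lap φ x ≤ -1) (z : V) : expTime B z ≤ φ z := by
  have hsum : ∑' k, stayMass B z (k + 1) ≤ ENNReal.ofReal (φ z) :=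
    ENNReal.tsum_le_of_sum_range_le fun K => sum_range_stayMass_le hφ hLap K z
  have hfin (k : ℕ) : stayMass B z (k + 1) ≠ ∞ :=
    ne_top_of_le_ne_top ENNReal.ofReal_ne_top ((ENNReal.le_tsum k).trans hsum)
  calc expTime B z = (∑' k, stayMass B z (k + 1)).toReal := by
        simp only [expTime, stayProb_eq_toReal_stayMass, ENNReal.tsum_toReal_eq hfin]
    _ ≤ φ z := ENNReal.toReal_le_of_le_ofReal (hφ z) hsum

noncomputable def wedge (x b : ℝ) : ℝ := 2 * (b / x) - (b / x) ^ 3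

lemma wedge_superharmonic {x b : ℝ} (hx : 4 ≤ x) (hb : 1 ≤ b) :
    wedge (x + 1) b + wedge (x - 1) b + wedge x (b + 1) + wedge x (b - 1) ≤ 4 * wedge x b := by
  have hx0 : 0 < x := by linarith
  have hxm : 0 < x - 1 := by linarith
  have hxp : 0 < x + 1 := by linarith
  have hshift_b : wedge x (b + 1) + wedge x (b - 1)
      = 4 * b / x - 2 * b ^ 3 / x ^ 3 - 6 * b / x ^ 3 := by
    unfold wedge; field_simp; ring
  have hshift_x : wedge (x + 1) b + wedge (x - 1) b
      = 2 * b / (x + 1) + 2 * b / (x - 1) - (b ^ 3 / (x + 1) ^ 3 + b ^ 3 / (x - 1) ^ 3) := by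
    simp only [wedge, div_pow]; ring
  have hcenter : 4 * wedge x b = 8 * b / x - 4 * b ^ 3 / x ^ 3 := by
    unfold wedge; ring
  have hlinear : 2 * b / (x + 1) + 2 * b / (x - 1) ≤ 4 * b / x + 6 * b / x ^ 3 := by
    rw [div_add_div _ _ hxp.ne' hxm.ne', div_add_div _ _ hx0.ne' (pow_pos hx0 3).ne',
      div_le_div_iff₀ (by positivity) (by positivity)]
    have hx3 : 0 ≤ x ^ 2 - 3 := by nlinarith
    nlinarith [mul_nonneg (by linarith : (0 : ℝ) ≤ b) hx3,
      mul_nonneg (mul_nonneg (by linarith : (0 : ℝ) ≤ b) hx3) (sq_nonneg x)]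
  -- convexity of `t ↦ t⁻³`
  have hcubic : 2 * b ^ 3 / x ^ 3 ≤ b ^ 3 / (x + 1) ^ 3 + b ^ 3 / (x - 1) ^ 3 := by
    rw [div_add_div _ _ (pow_pos hxp 3).ne' (pow_pos hxm 3).ne',
      div_le_div_iff₀ (by positivity) (by positivity)]
    have h12 : 0 ≤ 12 * x ^ 4 - 6 * x ^ 2 + 2 := by
      nlinarith [sq_nonneg (x ^ 2 - 1 / 4), sq_nonneg x]
    nlinarith [mul_nonneg (pow_nonneg (by linarith : (0 : ℝ) ≤ b) 3) h12]
  linear_combination hshift_x + hshift_b - hcenter + hlinear + hcubic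

lemma wedge_le {x b : ℝ} (hx : 0 < x) (hb : 0 ≤ b) : wedge x b ≤ 2 * b / x := by
  have : 0 ≤ (b / x) ^ 3 := by positivity
  unfold wedge; rw [mul_div_assoc]; linarith

lemma wedge_nonneg {x b : ℝ} (hx : 0 < x) (hb : 0 ≤ b) (hbx : b ≤ x / 2) :
    0 ≤ wedge x b := by
  have ht : b / x ≤ 1 / 2 := by rw [div_le_iff₀ hx]; linarith
  have ht0 : 0 ≤ b / x := by positivity
  unfold wedge; nlinarith [mul_nonneg ht0 ht0]

lemma le_of_wedge_le_two_fifths {x b : ℝ} (hx : 0 < x) (hb : 0 ≤ b) (hbx : b ≤ x / 2)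
    (h : wedge x b ≤ 2 / 5) : 35 * b ≤ 8 * x := by
  have ht : b / x ≤ 1 / 2 := by rw [div_le_iff₀ hx]; linarith
  have ht0 : 0 ≤ b / x := by positivity
  have : b / x ≤ 8 / 35 := by unfold wedge at h; nlinarith [mul_nonneg ht0 ht0]
  rw [div_le_iff₀ hx] at this; linarith

noncomputable def wedgeBarrier (w : V) : ℝ :=
  if 1 ≤ w.1 then wedge w.1 (min |(w.2 : ℝ)| (w.1 / 2)) else 1

lemma wedgeBarrier_nonneg (w : V) : 0 ≤ wedgeBarrier w := by
  unfold wedgeBarrier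
  split_ifs with h
  · have hx : (1 : ℝ) ≤ w.1 := by exact_mod_cast h
    exact wedge_nonneg (by linarith) (le_min (abs_nonneg _) (by linarith)) (min_le_right _ _)
  · norm_num

lemma wedgeBarrier_eq {w : V} (h1 : 1 ≤ w.1) (h2 : |(w.2 : ℝ)| ≤ w.1 / 2) :
    wedgeBarrier w = wedge w.1 |(w.2 : ℝ)| := by
  rw [wedgeBarrier, if_pos h1, min_eq_left h2]

lemma wedgeBarrier_le {w : V} (h1 : 1 ≤ w.1) : wedgeBarrier w ≤ 2 * |(w.2 : ℝ)| / w.1 := by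
  have hx : (1 : ℝ) ≤ w.1 := by exact_mod_cast h1
  rw [wedgeBarrier, if_pos h1]
  refine (wedge_le (by linarith) (le_min (abs_nonneg _) (by linarith))).trans ?_
  gcongr
  exact min_le_left _ _

lemma wedgeBarrier_le_two_fifths {w : V} (h : wedgeBarrier w ≤ 2 / 5) :
    1 ≤ w.1 ∧ 35 * |(w.2 : ℝ)| ≤ 8 * w.1 := by
  have h1 : 1 ≤ w.1 := by
    by_contra h1
    rw [wedgeBarrier, if_neg h1] at h
    norm_num at h
  have hx : (0 : ℝ) < w.1 := by exact_mod_cast h1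
  have h2 : |(w.2 : ℝ)| ≤ w.1 / 2 := by
    by_contra! h2
    rw [wedgeBarrier, if_pos h1, min_eq_right h2.le, wedge, div_div_cancel_left' hx.ne'] at h
    norm_num at h
  exact ⟨h1, le_of_wedge_le_two_fifths hx (abs_nonneg _) h2 (wedgeBarrier_eq h1 h2 ▸ h)⟩

lemma mem_wedge_of_mem_nbrs {z w : V} (hw : w ∈ nbrs z) (hb : 1 ≤ |(z.2 : ℝ)|)
    (hwedge : 35 * |(z.2 : ℝ)| ≤ 8 * z.1) :
    1 ≤ w.1 ∧ |(w.2 : ℝ)| ≤ w.1 / 2 ∧ |(w.2 : ℝ)| ≤ |(z.2 : ℝ)| + 1 := by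
  have hx5 : 5 ≤ z.1 := by
    have : (4 : ℝ) < z.1 := by linarith
    have : (4 : ℤ) < z.1 := by exact_mod_cast this
    omega
  have hy := neg_abs_le (z.2 : ℝ)
  have hy' := le_abs_self (z.2 : ℝ)
  simp only [nbrs, List.mem_cons, List.not_mem_nil, or_false] at hw
  rcases hw with rfl | rfl | rfl | rfl <;>
    refine ⟨by omega, ?_, ?_⟩ <;> push_cast <;> refine abs_le.mpr ⟨?_, ?_⟩ <;> linarith

noncomputable def diskBarrier (R : ℝ) (w : V) : ℝ :=
  40 * R ^ 2 - min ((w.1 : ℝ) ^ 2 + (w.2 : ℝ) ^ 2) ((4 * R + 1) ^ 2)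

noncomputable def slitBarrier (R : ℝ) (w : V) : ℝ :=
  66 * R * |(w.2 : ℝ)| - 2 * min ((w.2 : ℝ) ^ 2) ((4 * R + 1) ^ 2)
    + 100 * R ^ 2 * min (1 / 2) (wedgeBarrier w)

noncomputable def exitBarrier (R : ℝ) (w : V) : ℝ := min (diskBarrier R w) (slitBarrier R w)

noncomputable def slitProfile (R x b : ℝ) : ℝ :=
  66 * R * b - 2 * b ^ 2 + 100 * R ^ 2 * wedge x b

section Barriers

variable {R : ℝ}

lemma slitProfile_superharmonic {x b : ℝ} (hx : 4 ≤ x) (hb : 1 ≤ b) :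
    1 / 4 * (slitProfile R (x + 1) b + slitProfile R (x - 1) b + slitProfile R x (b + 1)
      + slitProfile R x (b - 1)) - slitProfile R x b ≤ -1 := by
  have := mul_le_mul_of_nonneg_left (wedge_superharmonic hx hb) (by positivity : 0 ≤ 100 * R ^ 2)
  unfold slitProfile
  linarith

lemma diskBarrier_le (w : V) : diskBarrier R w ≤ 40 * R ^ 2 := by
  have : 0 ≤ min ((w.1 : ℝ) ^ 2 + (w.2 : ℝ) ^ 2) ((4 * R + 1) ^ 2) :=
    le_min (by positivity) (sq_nonneg _)
  unfold diskBarrier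
  linarith

lemma diskBarrier_nonneg (hR : 1 ≤ R) (w : V) : 0 ≤ diskBarrier R w := by
  have := min_le_right ((w.1 : ℝ) ^ 2 + (w.2 : ℝ) ^ 2) ((4 * R + 1) ^ 2)
  unfold diskBarrier
  nlinarith

lemma slitBarrier_linear_part_nonneg (hR : 1 ≤ R) (y : ℝ) :
    0 ≤ 66 * R * |y| - 2 * min (y ^ 2) ((4 * R + 1) ^ 2) := by
  rcases le_total |y| (4 * R + 1) with h | h
  · have : min (y ^ 2) ((4 * R + 1) ^ 2) ≤ |y| ^ 2 := (min_le_left _ _).trans_eq (sq_abs y).symm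
    nlinarith [mul_nonneg (abs_nonneg y) (by linarith : 0 ≤ 33 * R - |y|)]
  · have := min_le_right (y ^ 2) ((4 * R + 1) ^ 2)
    nlinarith

lemma slitBarrier_nonneg (hR : 1 ≤ R) (w : V) : 0 ≤ slitBarrier R w := by
  have h1 := slitBarrier_linear_part_nonneg hR w.2
  have h2 : 0 ≤ min (1 / 2) (wedgeBarrier w) := le_min (by norm_num) (wedgeBarrier_nonneg w)
  unfold slitBarrier
  linarith [mul_nonneg (by positivity : 0 ≤ 100 * R ^ 2) h2]

lemma exitBarrier_nonneg (hR : 1 ≤ R) (w : V) : 0 ≤ exitBarrier R w :=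
  le_min (diskBarrier_nonneg hR w) (slitBarrier_nonneg hR w)

lemma slitBarrier_le_slitProfile {w : V} (h1 : 1 ≤ w.1) (h2 : |(w.2 : ℝ)| ≤ w.1 / 2)
    (h3 : |(w.2 : ℝ)| ≤ 4 * R + 1) : slitBarrier R w ≤ slitProfile R w.1 |(w.2 : ℝ)| := by
  have hsq : (w.2 : ℝ) ^ 2 ≤ (4 * R + 1) ^ 2 := by
    rw [← sq_abs]; exact pow_le_pow_left₀ (abs_nonneg _) h3 2
  rw [slitBarrier, slitProfile, min_eq_left hsq, sq_abs, wedgeBarrier_eq h1 h2]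
  gcongr
  exact min_le_right _ _

lemma slitBarrier_eq_slitProfile {w : V} (h1 : 1 ≤ w.1) (h2 : |(w.2 : ℝ)| ≤ w.1 / 2)
    (h3 : |(w.2 : ℝ)| ≤ 4 * R + 1) (h4 : wedgeBarrier w ≤ 1 / 2) :
    slitBarrier R w = slitProfile R w.1 |(w.2 : ℝ)| := by
  have hsq : (w.2 : ℝ) ^ 2 ≤ (4 * R + 1) ^ 2 := by
    rw [← sq_abs]; exact pow_le_pow_left₀ (abs_nonneg _) h3 2
  rw [slitBarrier, slitProfile, min_eq_left hsq, sq_abs, min_eq_right h4, wedgeBarrier_eq h1 h2]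

lemma wedgeBarrier_le_of_slitBarrier_le (hR : 1 ≤ R) {w : V}
    (h : slitBarrier R w ≤ 40 * R ^ 2) :
    wedgeBarrier w ≤ 2 / 5 := by
  have hlin := slitBarrier_linear_part_nonneg hR w.2
  have hmul : R ^ 2 * (100 * min (1 / 2) (wedgeBarrier w)) ≤ R ^ 2 * 40 := by
    unfold slitBarrier at h; linarith
  have hmin : min (1 / 2) (wedgeBarrier w) ≤ 2 / 5 := by
    linarith [le_of_mul_le_mul_left hmul (by positivity)]
  exact (min_le_iff.mp hmin).resolve_left (by norm_num)

lemma Lap_diskBarrier_le {z : V} (hz : nrm z < 4 * R) : Lap (diskBarrier R) z ≤ -1 := by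
  have hdisk {w : V} (hw : (w.1 : ℝ) ^ 2 + (w.2 : ℝ) ^ 2 ≤ (4 * R + 1) ^ 2) :
      diskBarrier R w = 40 * R ^ 2 - ((w.1 : ℝ) ^ 2 + (w.2 : ℝ) ^ 2) := by
    rw [diskBarrier, min_eq_left hw]
  have hr : 0 ≤ nrm z := norm_nonneg _
  calc Lap (diskBarrier R) z
      ≤ Lap (fun w => 40 * R ^ 2 - ((w.1 : ℝ) ^ 2 + (w.2 : ℝ) ^ 2)) z := by
        refine Lap_le_Lap_of_le (fun w hw => (hdisk ?_).le) (hdisk ?_)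
        · exact (sq_add_sq_le_of_mem_nbrs hw).trans
            (pow_le_pow_left₀ (by positivity) (by linarith) 2)
        · rw [← nrm_sq]; exact pow_le_pow_left₀ hr (by linarith) 2
    _ = -1 := by
        simp only [Lap, nbrs, List.map_cons, List.map_nil, List.sum_cons, List.sum_nil]
        push_cast
        ring

lemma Lap_slitBarrier_le {z : V} (hz : z ∉ Zplus) (hball : nrm z < 4 * R)
    (hψ : wedgeBarrier z ≤ 2 / 5) : Lap (slitBarrier R) z ≤ -1 := by
  obtain ⟨hx1, hwedge⟩ := wedgeBarrier_le_two_fifths hψ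
  have hy0 : z.2 ≠ 0 := fun h => hz ⟨by omega, h⟩
  have hb1 : (1 : ℝ) ≤ |(z.2 : ℝ)| := by exact_mod_cast Int.one_le_abs hy0
  have hbR : |(z.2 : ℝ)| ≤ 4 * R := (abs_snd_le_nrm z).trans hball.le
  calc Lap (slitBarrier R) z ≤ Lap (fun w => slitProfile R w.1 |(w.2 : ℝ)|) z := by
        refine Lap_le_Lap_of_le (fun w hw => ?_)
          (slitBarrier_eq_slitProfile hx1 (by linarith) (by linarith) (by linarith))
        obtain ⟨hw1, hw2, hw3⟩ := mem_wedge_of_mem_nbrs hw hb1 hwedge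
        exact slitBarrier_le_slitProfile hw1 hw2 (by linarith)
    _ = _ := Lap_comp_abs_snd _ hy0
    _ ≤ -1 := slitProfile_superharmonic (by linarith) hb1

lemma Lap_exitBarrier_le (hR : 1 ≤ R) {z : V} (hz : z ∈ contSet (4 * R)) :
    Lap (exitBarrier R) z ≤ -1 := by
  obtain ⟨hball, hzZ⟩ := hz
  rcases le_total (diskBarrier R z) (slitBarrier R z) with h | h
  · calc Lap (exitBarrier R) z ≤ Lap (diskBarrier R) z :=
          Lap_le_Lap_of_le (fun w _ => min_le_left _ _) (min_eq_left h)
      _ ≤ -1 := Lap_diskBarrier_le hball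
  · calc Lap (exitBarrier R) z ≤ Lap (slitBarrier R) z :=
          Lap_le_Lap_of_le (fun w _ => min_le_right _ _) (min_eq_right h)
      _ ≤ -1 := Lap_slitBarrier_le hzZ hball
          (wedgeBarrier_le_of_slitBarrier_le hR (h.trans (diskBarrier_le z)))

end Barriers

lemma sin_half_theta_nonneg (z : V) : 0 ≤ Real.sin (theta z / 2) := by
  have := Complex.neg_pi_lt_arg (toC z)
  have := Complex.arg_le_pi (toC z)
  apply Real.sin_nonneg_of_nonneg_of_le_pi <;> unfold theta <;> split_ifs <;> linarith [Real.pi_pos]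

lemma nrm_sub_fst {z : V} (hz : z ≠ 0) :
    nrm z - z.1 = 2 * nrm z * Real.sin (theta z / 2) ^ 2 := by
  have hcos : Real.cos (theta z) = z.1 / nrm z := by
    have harg := Complex.cos_arg (norm_pos_iff.mp (nrm_pos hz))
    unfold theta
    split_ifs <;> simp only [Real.cos_add_two_pi, harg, toC_re, nrm]
  have h := Real.cos_two_mul_eq_one_sub (theta z / 2)
  rw [mul_div_cancel₀ _ two_ne_zero, hcos, div_eq_iff (nrm_pos hz).ne'] at h
  linarith

lemma abs_snd_le_two_mul_nrm_mul_sin {z : V} (hz : z ≠ 0) :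
    |(z.2 : ℝ)| ≤ 2 * nrm z * Real.sin (theta z / 2) := by
  have hr := nrm_pos hz
  have hs := sin_half_theta_nonneg z
  have hx := le_abs_self (z.1 : ℝ) |>.trans (abs_fst_le_nrm z)
  have hy : (z.2 : ℝ) ^ 2 = (nrm z - z.1) * (nrm z + z.1) := by linear_combination -nrm_sq z
  rw [nrm_sub_fst hz] at hy
  refine abs_le_of_sq_le_sq ?_ (by positivity)
  nlinarith [mul_le_mul_of_nonneg_left hx
    (by positivity : 0 ≤ 2 * nrm z * Real.sin (theta z / 2) ^ 2)]

lemma min_half_wedgeBarrier_le {z : V} (hz : z ∉ Zplus) :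
    min (1 / 2) (wedgeBarrier z) ≤ 5 * Real.sin (theta z / 2) := by
  have hz0 := ne_zero_of_notMem_Zplus hz
  have hs := sin_half_theta_nonneg z
  rcases le_or_gt (1 / 8) (Real.sin (theta z / 2)) with hs8 | hs8
  · linarith [min_le_left (1 / 2 : ℝ) (wedgeBarrier z)]
  have hr := nrm_pos hz0
  have hs2 : Real.sin (theta z / 2) ^ 2 ≤ 1 / 64 := by nlinarith
  have hx : 31 * nrm z ≤ 32 * z.1 := by
    nlinarith [nrm_sub_fst hz0, mul_le_mul_of_nonneg_left hs2 hr.le]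
  have hx1 : 1 ≤ z.1 := by
    have : (0 : ℝ) < z.1 := by linarith
    have : (0 : ℤ) < z.1 := by exact_mod_cast this
    omega
  have hx0 : (0 : ℝ) < z.1 := by exact_mod_cast hx1
  calc min (1 / 2) (wedgeBarrier z) ≤ wedgeBarrier z := min_le_right _ _
    _ ≤ 2 * |(z.2 : ℝ)| / z.1 := wedgeBarrier_le hx1
    _ ≤ 5 * Real.sin (theta z / 2) := by
        rw [div_le_iff₀ hx0]
        nlinarith [abs_snd_le_two_mul_nrm_mul_sin hz0, mul_le_mul_of_nonneg_right hx hs]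

lemma slitBarrier_le_mul_sin {R : ℝ} (hR : 0 ≤ R) {z : V} (hz : z ∉ Zplus)
    (hn : nrm z ≤ 4 * R) :
    slitBarrier R z ≤ 1028 * Real.sin (theta z / 2) * R ^ 2 := by
  have hs := sin_half_theta_nonneg z
  have hy := abs_snd_le_two_mul_nrm_mul_sin (ne_zero_of_notMem_Zplus hz)
  have hmin := min_half_wedgeBarrier_le hz
  have hsq : 0 ≤ min ((z.2 : ℝ) ^ 2) ((4 * R + 1) ^ 2) := le_min (sq_nonneg _) (sq_nonneg _)
  unfold slitBarrier
  nlinarith [mul_le_mul_of_nonneg_left hy (by positivity : 0 ≤ 66 * R),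
    mul_le_mul_of_nonneg_left hn (by positivity : 0 ≤ R * Real.sin (theta z / 2)),
    mul_le_mul_of_nonneg_left hmin (by positivity : 0 ≤ 100 * R ^ 2)]

/-- There exists `c < ∞` such that for all `R ≥ 1` and all
`z ∈ ℤ² ∖ ℤ₊` with `|z| ≤ 4R`: `E^z[σ_{4R} ∧ τ_+] ≤ c sin(θ_z/2) R²`. -/
theorem stmt15_expected_exit_time :
    ∃ c : ℝ, ∀ R : ℝ, 1 ≤ R → ∀ z : V, z ∉ Zplus → nrm z ≤ 4 * R →
      expTime (contSet (4 * R)) z ≤ c * Real.sin (theta z / 2) * R ^ 2 := by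
  refine ⟨1028, fun R hR z hz hn => ?_⟩
  calc expTime (contSet (4 * R)) z ≤ exitBarrier R z :=
        expTime_le_of_Lap_le_neg_one (exitBarrier_nonneg hR)
          (fun _ hx => Lap_exitBarrier_le hR hx) z
    _ ≤ slitBarrier R z := min_le_right _ _
    _ ≤ 1028 * Real.sin (theta z / 2) * R ^ 2 := slitBarrier_le_mul_sin (by linarith) hz hn

end LERW
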